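/- arXiv:1510.08643 — 4 statements merged into one kernel-verified Lean document; each statement's English description precedes it below -/
import Mathlib

section
/- If Q(x,p,t) is a smooth solution of the pseudo-diffusion equation ∂Q/∂t - (1/4)∂²Q/∂x² + (1/(4t²))∂²Q/∂p² = 0 for t > 0, then the function R(x,p,t) := Q(p,x,1/t) is also a solution of the same equation. -/
noncomputable def pdT (Q : ℝ → ℝ → ℝ → ℝ) (x p t : ℝ) : ℝ := deriv (fun s => Q x p s) t
noncomputable def pdX (Q : ℝ → ℝ → ℝ → ℝ) (x p t : ℝ) : ℝ := deriv (fun z => Q z p t) x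
noncomputable def pdP (Q : ℝ → ℝ → ℝ → ℝ) (x p t : ℝ) : ℝ := deriv (fun z => Q x z t) p
noncomputable def pdXX (Q : ℝ → ℝ → ℝ → ℝ) (x p t : ℝ) : ℝ :=
  deriv (fun y => deriv (fun z => Q z p t) y) x
noncomputable def pdPP (Q : ℝ → ℝ → ℝ → ℝ) (x p t : ℝ) : ℝ :=
  deriv (fun y => deriv (fun z => Q x z t) y) p

/-- The pseudo-diffusion operator `L = ∂_t - (1/4)∂_xx + (1/(4t²))∂_pp`. -/
noncomputable def Lop (Q : ℝ → ℝ → ℝ → ℝ) (x p t : ℝ) : ℝ :=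
  pdT Q x p t - (1/4) * pdXX Q x p t + 1/(4*t^2) * pdPP Q x p t

/-- Smoothness on the region `t > 0`. -/
def SmoothPos (Q : ℝ → ℝ → ℝ → ℝ) : Prop :=
  ContDiffOn ℝ (⊤ : ℕ∞) (fun v : ℝ × ℝ × ℝ => Q v.1 v.2.1 v.2.2) {v : ℝ × ℝ × ℝ | 0 < v.2.2}

/-- If `Q` solves the pseudo-diffusion equation for `t > 0`, so does `R(x,p,t) := Q(p,x,1/t)`. -/
theorem stmt1 (Q : ℝ → ℝ → ℝ → ℝ) (hQ : SmoothPos Q)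
    (hsol : ∀ x p t : ℝ, 0 < t → Lop Q x p t = 0) :
    ∀ x p t : ℝ, 0 < t → Lop (fun x p t => Q p x (1/t)) x p t = 0 := by
  intro x p t ht
  have hst : (0:ℝ) < 1/t := by positivity
  have hopen : IsOpen {v : ℝ × ℝ × ℝ | 0 < v.2.2} :=
    isOpen_lt continuous_const (continuous_snd.comp continuous_snd)
  have hdiff : DifferentiableAt ℝ (fun v : ℝ × ℝ × ℝ => Q v.1 v.2.1 v.2.2) (p, x, 1/t) := by
    have hmem : ((p, x, 1/t) : ℝ × ℝ × ℝ) ∈ {v : ℝ × ℝ × ℝ | 0 < v.2.2} := hst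
    exact (hQ.contDiffAt (hopen.mem_nhds hmem)).differentiableAt (by simp)
  have hmap : DifferentiableAt ℝ (fun s : ℝ => ((p, x, s) : ℝ × ℝ × ℝ)) (1/t) := by
    fun_prop
  have hg : DifferentiableAt ℝ (fun s => Q p x s) (1/t) := by
    have h : DifferentiableAt ℝ ((fun v : ℝ × ℝ × ℝ => Q v.1 v.2.1 v.2.2) ∘ (fun s : ℝ => (p, x, s))) (1/t) := hdiff.comp (1/t) hmap
    exact h
  have hinv : HasDerivAt (fun s : ℝ => 1/s) (-(1/t^2)) t := by
    simpa [one_div] using hasDerivAt_inv ht.ne'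
  have hchain : pdT (fun x p t => Q p x (1/t)) x p t = -(1/t^2) * pdT Q p x (1/t) := by
    have hc : HasDerivAt (fun s : ℝ => Q p x (1/s))
        (deriv (fun s => Q p x s) (1/t) * -(1/t^2)) t := hg.hasDerivAt.comp t hinv
    simp only [pdT]
    rw [hc.deriv]
    ring
  have hXX : pdXX (fun x p t => Q p x (1/t)) x p t = pdPP Q p x (1/t) := rfl
  have hPP : pdPP (fun x p t => Q p x (1/t)) x p t = pdXX Q p x (1/t) := rfl
  have hs := hsol p x (1/t) hst
  simp only [Lop] at hs ⊢
  rw [hchain, hXX, hPP]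
  have h1 : (1:ℝ)/(4*(1/t)^2) = t^2/4 := by
    field_simp
  rw [h1] at hs
  have ht2 : (t:ℝ)^2 ≠ 0 := pow_ne_zero _ ht.ne'
  field_simp at hs ⊢
  nlinarith [hs]
end

section
/- Let u(x,y,t) be a smooth solution of u_t = u_xx - u_yy. Then Q(x,p,t) := t^{1/2}·exp(-t p²/4)·u(x, p t, t) satisfies ∂Q/∂t - ∂²Q/∂x² + (1/t²)∂²Q/∂p² = 0 for t > 0. -/
/-- If `u(x,y,t)` is a smooth solution of `u_t = u_xx - u_yy`, then
`Q(x,p,t) := √t · exp(-t p²/4) · u(x, pt, t)` satisfies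
`Q_t - Q_xx + (1/t²) Q_pp = 0` for `t > 0`. -/
theorem stmt4 (u : ℝ → ℝ → ℝ → ℝ)
    (hu : ContDiff ℝ (⊤ : ℕ∞) (fun v : ℝ × ℝ × ℝ => u v.1 v.2.1 v.2.2))
    (husol : ∀ x y t : ℝ, pdT u x y t = pdXX u x y t - pdPP u x y t) :
    ∀ x p t : ℝ, 0 < t →
      pdT (fun x p t => Real.sqrt t * Real.exp (-(t * p^2)/4) * u x (p*t) t) x p t
      - pdXX (fun x p t => Real.sqrt t * Real.exp (-(t * p^2)/4) * u x (p*t) t) x p t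
      + (1/t^2) * pdPP (fun x p t => Real.sqrt t * Real.exp (-(t * p^2)/4) * u x (p*t) t) x p t
      = 0 := by
  intro x p t ht
  have ht' : t ≠ 0 := ne_of_gt ht
  set Q : ℝ → ℝ → ℝ → ℝ :=
    fun x p t => Real.sqrt t * Real.exp (-(t * p^2)/4) * u x (p*t) t with hQdef
  set U : ℝ × ℝ × ℝ → ℝ := fun v => u v.1 v.2.1 v.2.2 with hUdef
  have hU : ContDiff ℝ (⊤ : ℕ∞) U := hu
  set e1 : ℝ × ℝ × ℝ := (1, 0, 0) with he1
  set e2 : ℝ × ℝ × ℝ := (0, 1, 0) with he2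
  set e3 : ℝ × ℝ × ℝ := (0, 0, 1) with he3
  set U1 : ℝ × ℝ × ℝ → ℝ := fun v => fderiv ℝ U v e1 with hU1def
  set U2 : ℝ × ℝ × ℝ → ℝ := fun v => fderiv ℝ U v e2 with hU2def
  set U3 : ℝ × ℝ × ℝ → ℝ := fun v => fderiv ℝ U v e3 with hU3def
  have hcU1 : ContDiff ℝ (⊤ : ℕ∞) U1 := (hU.fderiv_right (by simp)).clm_apply contDiff_const
  have hcU2 : ContDiff ℝ (⊤ : ℕ∞) U2 := (hU.fderiv_right (by simp)).clm_apply contDiff_const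
  set U11 : ℝ × ℝ × ℝ → ℝ := fun v => fderiv ℝ U1 v e1 with hU11def
  set U22 : ℝ × ℝ × ℝ → ℝ := fun v => fderiv ℝ U2 v e2 with hU22def
  -- chain rule along curves
  have key : ∀ (F : ℝ × ℝ × ℝ → ℝ), ContDiff ℝ (⊤ : ℕ∞) F → ∀ (c : ℝ → ℝ × ℝ × ℝ) (c' : ℝ × ℝ × ℝ)
      (s : ℝ), HasDerivAt c c' s → HasDerivAt (fun s => F (c s)) (fderiv ℝ F (c s) c') s :=
    fun F hF c c' s hc => ((hF.differentiable (by simp) (c s)).hasFDerivAt).comp_hasDerivAt s hc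
  -- standard curves
  have curX : ∀ (b c z : ℝ), HasDerivAt (fun w : ℝ => ((w : ℝ), b, c)) e1 z := fun b c z =>
    (hasDerivAt_id z).prodMk ((hasDerivAt_const z b).prodMk (hasDerivAt_const z c))
  have curP : ∀ (a c z : ℝ), HasDerivAt (fun w : ℝ => ((a : ℝ), w, c)) e2 z := fun a c z =>
    (hasDerivAt_const z a).prodMk ((hasDerivAt_id z).prodMk (hasDerivAt_const z c))
  have curT : ∀ (a b z : ℝ), HasDerivAt (fun w : ℝ => ((a : ℝ), b, w)) e3 z := fun a b z =>
    (hasDerivAt_const z a).prodMk ((hasDerivAt_const z b).prodMk (hasDerivAt_id z))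
  have curPt : ∀ z : ℝ, HasDerivAt (fun w : ℝ => ((x : ℝ), w * t, t)) ((0 : ℝ), t, 0) z := by
    intro z
    have h1 : HasDerivAt (fun w : ℝ => w * t) t z := by simpa using (hasDerivAt_id z).mul_const t
    exact (hasDerivAt_const z x).prodMk (h1.prodMk (hasDerivAt_const z t))
  -- identify pd-derivatives of u with directional derivatives of U
  have hpdT : ∀ a b c : ℝ, pdT u a b c = U3 (a, b, c) := fun a b c =>
    (key U hU _ e3 c (curT a b c)).deriv
  have hpdXX : ∀ a b c : ℝ, pdXX u a b c = U11 (a, b, c) := by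
    intro a b c
    have h1 : (fun y => deriv (fun z => u z b c) y) = fun y => U1 (y, b, c) := by
      funext y; exact (key U hU _ e1 y (curX b c y)).deriv
    show deriv (fun y => deriv (fun z => u z b c) y) a = _
    rw [h1]
    exact (key U1 hcU1 _ e1 a (curX b c a)).deriv
  have hpdPP : ∀ a b c : ℝ, pdPP u a b c = U22 (a, b, c) := by
    intro a b c
    have h1 : (fun y => deriv (fun z => u a z c) y) = fun y => U2 (a, y, c) := by
      funext y; exact (key U hU _ e2 y (curP a c y)).deriv
    show deriv (fun y => deriv (fun z => u a z c) y) b = _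
    rw [h1]
    exact (key U2 hcU2 _ e2 b (curP a c b)).deriv
  have hsol : ∀ a b c : ℝ, U3 (a, b, c) = U11 (a, b, c) - U22 (a, b, c) := by
    intro a b c
    rw [← hpdT, ← hpdXX, ← hpdPP]; exact husol a b c
  -- the time derivative of Q
  have hA : HasDerivAt Real.sqrt (1 / (2 * Real.sqrt t)) t := Real.hasDerivAt_sqrt ht'
  have hB : HasDerivAt (fun s : ℝ => Real.exp (-(s * p ^ 2) / 4))
      (Real.exp (-(t * p ^ 2) / 4) * (-(p ^ 2) / 4)) t := by
    have h : HasDerivAt (fun s : ℝ => -(s * p ^ 2) / 4) (-(p ^ 2) / 4) t := by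
      have := (((hasDerivAt_id t).mul_const (p ^ 2)).neg).div_const 4
      simpa using this
    exact h.exp
  have hdir3 : fderiv ℝ U (x, p * t, t) ((0 : ℝ), p, 1) = p * U2 (x, p * t, t) + U3 (x, p * t, t) := by
    have h : ((0 : ℝ), (p : ℝ), (1 : ℝ)) = p • e2 + e3 := by simp [he2, he3, Prod.ext_iff]
    rw [h, map_add, map_smul, smul_eq_mul]
  have hC : HasDerivAt (fun s : ℝ => u x (p * s) s)
      (p * U2 (x, p * t, t) + U3 (x, p * t, t)) t := by
    have hcur : HasDerivAt (fun s : ℝ => ((x : ℝ), p * s, s)) ((0 : ℝ), p, 1) t := by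
      have h1 : HasDerivAt (fun s : ℝ => p * s) p t := by
        simpa using (hasDerivAt_id t).const_mul p
      exact (hasDerivAt_const t x).prodMk (h1.prodMk (hasDerivAt_id t))
    have h := key U hU _ _ t hcur
    rw [hdir3] at h
    exact h
  have hQt : pdT Q x p t =
      (1 / (2 * Real.sqrt t) * Real.exp (-(t * p ^ 2) / 4) +
        Real.sqrt t * (Real.exp (-(t * p ^ 2) / 4) * (-(p ^ 2) / 4))) * u x (p * t) t +
      Real.sqrt t * Real.exp (-(t * p ^ 2) / 4) *
        (p * U2 (x, p * t, t) + U3 (x, p * t, t)) :=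
    ((hA.mul hB).mul hC).deriv
  -- the second x-derivative of Q
  have hQxx : pdXX Q x p t =
      Real.sqrt t * Real.exp (-(t * p ^ 2) / 4) * U11 (x, p * t, t) := by
    have h1 : (fun y => deriv (fun z => Q z p t) y) =
        fun y => Real.sqrt t * Real.exp (-(t * p ^ 2) / 4) * U1 (y, p * t, t) := by
      funext y
      exact ((key U hU _ e1 y (curX (p * t) t y)).const_mul
        (Real.sqrt t * Real.exp (-(t * p ^ 2) / 4))).deriv
    show deriv (fun y => deriv (fun z => Q z p t) y) x = _
    rw [h1]
    exact ((key U1 hcU1 _ e1 x (curX (p * t) t x)).const_mul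
      (Real.sqrt t * Real.exp (-(t * p ^ 2) / 4))).deriv
  -- the second p-derivative of Q
  have hE : ∀ z : ℝ, HasDerivAt (fun w : ℝ => Real.exp (-(t * w ^ 2) / 4))
      (Real.exp (-(t * z ^ 2) / 4) * (-(t * z) / 2)) z := by
    intro z
    have h : HasDerivAt (fun w : ℝ => -(t * w ^ 2) / 4) (-(t * z) / 2) z := by
      have := (((hasDerivAt_pow 2 z).const_mul t).neg).div_const 4
      refine this.congr_deriv ?_
      push_cast; ring
    exact h.exp
  have hEc : ∀ z : ℝ, HasDerivAt (fun w : ℝ => Real.sqrt t * Real.exp (-(t * w ^ 2) / 4))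
      (Real.sqrt t * (Real.exp (-(t * z ^ 2) / 4) * (-(t * z) / 2))) z :=
    fun z => (hE z).const_mul (Real.sqrt t)
  have hdir2 : ∀ (F : ℝ × ℝ × ℝ → ℝ) (v : ℝ × ℝ × ℝ),
      fderiv ℝ F v ((0 : ℝ), t, 0) = t * fderiv ℝ F v e2 := by
    intro F v
    have h : ((0 : ℝ), (t : ℝ), (0 : ℝ)) = t • e2 := by simp [he2, Prod.ext_iff]
    rw [h, map_smul, smul_eq_mul]
  have hV : ∀ z : ℝ, HasDerivAt (fun w : ℝ => u x (w * t) t) (t * U2 (x, z * t, t)) z := by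
    intro z
    have h := key U hU _ _ z (curPt z)
    rw [hdir2 U (x, z * t, t)] at h
    exact h
  have hV2 : ∀ z : ℝ, HasDerivAt (fun w : ℝ => U2 (x, w * t, t)) (t * U22 (x, z * t, t)) z := by
    intro z
    have h := key U2 hcU2 _ _ z (curPt z)
    rw [hdir2 U2 (x, z * t, t)] at h
    exact h
  have hstep2 : (fun y => deriv (fun z => Q x z t) y) = fun z =>
      Real.sqrt t * (Real.exp (-(t * z ^ 2) / 4) * (-(t * z) / 2)) * u x (z * t) t +
      Real.sqrt t * Real.exp (-(t * z ^ 2) / 4) * (t * U2 (x, z * t, t)) := by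
    funext z
    exact ((hEc z).mul (hV z)).deriv
  have hm : HasDerivAt (fun z : ℝ => -(t * z) / 2) (-(t * 1) / 2) p :=
    (((hasDerivAt_id p).const_mul t).neg).div_const 2
  have hA2 : HasDerivAt
      (fun z : ℝ => Real.sqrt t * (Real.exp (-(t * z ^ 2) / 4) * (-(t * z) / 2)))
      (Real.sqrt t * (Real.exp (-(t * p ^ 2) / 4) * (-(t * p) / 2) * (-(t * p) / 2) +
        Real.exp (-(t * p ^ 2) / 4) * (-(t * 1) / 2))) p :=
    ((hE p).mul hm).const_mul (Real.sqrt t)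
  have hD2 : HasDerivAt (fun z : ℝ => t * U2 (x, z * t, t)) (t * (t * U22 (x, p * t, t))) p :=
    (hV2 p).const_mul t
  have hQpp : pdPP Q x p t =
      (Real.sqrt t * (Real.exp (-(t * p ^ 2) / 4) * (-(t * p) / 2) * (-(t * p) / 2) +
        Real.exp (-(t * p ^ 2) / 4) * (-(t * 1) / 2))) * u x (p * t) t +
      Real.sqrt t * (Real.exp (-(t * p ^ 2) / 4) * (-(t * p) / 2)) * (t * U2 (x, p * t, t)) +
      (Real.sqrt t * (Real.exp (-(t * p ^ 2) / 4) * (-(t * p) / 2)) * (t * U2 (x, p * t, t)) +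
        Real.sqrt t * Real.exp (-(t * p ^ 2) / 4) * (t * (t * U22 (x, p * t, t)))) := by
    show deriv (fun y => deriv (fun z => Q x z t) y) p = _
    rw [hstep2]
    exact ((hA2.mul (hV p)).add ((hEc p).mul hD2)).deriv
  -- put things together
  have hs0 : Real.sqrt t ≠ 0 := ne_of_gt (Real.sqrt_pos.mpr ht)
  have hsq : (1 : ℝ) / (2 * Real.sqrt t) = Real.sqrt t / (2 * t) := by
    rw [div_eq_div_iff (by positivity) (by positivity)]
    nlinarith [Real.mul_self_sqrt ht.le]
  rw [hsol x (p * t) t, hsq] at hQt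
  rw [hQt, hQxx, hQpp]
  field_simp
  ring
end

section
/- The vector field X₅ = t∂_x - 2xu∂_u generates a symmetry of the pseudo-diffusion equation: if Q solves L Q = 0 with L = ∂_t - (1/4)∂_xx + (1/(4t²))∂_pp, then the operator A₅ = 2x + t∂_x satisfies [L, A₅] = 0, hence A₅Q is again a solution. -/
/-- The operator `A₅ = 2x + t∂_x`. -/
noncomputable def A5op (Q : ℝ → ℝ → ℝ → ℝ) : ℝ → ℝ → ℝ → ℝ :=
  fun x p t => 2*x*Q x p t + t * pdX Q x p t


open Set Filter

def Upos : Set (ℝ×ℝ×ℝ) := {v | 0 < v.2.2}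

lemma isOpen_Upos : IsOpen Upos :=
  isOpen_lt continuous_const (continuous_snd.comp continuous_snd)

noncomputable def DD (w : ℝ×ℝ×ℝ) (f : ℝ×ℝ×ℝ → ℝ) (v : ℝ×ℝ×ℝ) : ℝ := fderiv ℝ f v w

lemma DD_smooth {f : ℝ×ℝ×ℝ → ℝ} (hf : ContDiffOn ℝ (⊤ : ℕ∞) f Upos) (w : ℝ×ℝ×ℝ) :
    ContDiffOn ℝ (⊤ : ℕ∞) (DD w f) Upos :=
  (hf.fderiv_of_isOpen isOpen_Upos (by simp)).clm_apply contDiffOn_const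

lemma smooth_diffAt {f : ℝ×ℝ×ℝ → ℝ} (hf : ContDiffOn ℝ (⊤ : ℕ∞) f Upos) {v : ℝ×ℝ×ℝ}
    (hv : v ∈ Upos) : DifferentiableAt ℝ f v :=
  ((hf.differentiableOn (by simp)).differentiableAt (isOpen_Upos.mem_nhds hv))

lemma DD_swap {f : ℝ×ℝ×ℝ → ℝ} (hf : ContDiffOn ℝ (⊤ : ℕ∞) f Upos) {v : ℝ×ℝ×ℝ}
    (hv : v ∈ Upos) (a b : ℝ×ℝ×ℝ) : DD b (DD a f) v = DD a (DD b f) v := by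
  have hg : ContDiffOn ℝ (⊤ : ℕ∞) (fun w => fderiv ℝ f w) Upos :=
    hf.fderiv_of_isOpen isOpen_Upos (by simp)
  have hgd : DifferentiableAt ℝ (fun w => fderiv ℝ f w) v :=
    (hg.differentiableOn (by simp)).differentiableAt (isOpen_Upos.mem_nhds hv)
  have hev : ∀ᶠ y in nhds v, HasFDerivAt f (fderiv ℝ f y) y := by
    filter_upwards [isOpen_Upos.mem_nhds hv] with y hy
    exact (smooth_diffAt hf hy).hasFDerivAt
  have sym := second_derivative_symmetric_of_eventually hev hgd.hasFDerivAt
  have key : ∀ c d : ℝ×ℝ×ℝ, DD d (DD c f) v = fderiv ℝ (fderiv ℝ f) v d c := by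
    intro c d
    have h1 : HasFDerivAt (DD c f)
        ((ContinuousLinearMap.apply ℝ ℝ c).comp (fderiv ℝ (fderiv ℝ f) v)) v :=
      (ContinuousLinearMap.apply ℝ ℝ c).hasFDerivAt.comp v hgd.hasFDerivAt
    simp [DD, h1.fderiv]
  rw [key, key, sym]

lemma hasDerivAt_lineX {f : ℝ×ℝ×ℝ → ℝ} (hf : ContDiffOn ℝ (⊤ : ℕ∞) f Upos) (x p : ℝ) {t : ℝ}
    (ht : 0 < t) : HasDerivAt (fun z => f (z,p,t)) (DD (1,0,0) f (x,p,t)) x := by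
  have hd := smooth_diffAt hf (show ((x,p,t) : ℝ×ℝ×ℝ) ∈ Upos from ht)
  have h : HasDerivAt (fun z : ℝ => ((z,p,t) : ℝ×ℝ×ℝ)) (1,0,0) x :=
    (hasDerivAt_id x).prodMk (hasDerivAt_const x (p,t))
  exact hd.hasFDerivAt.comp_hasDerivAt x h

lemma hasDerivAt_lineP {f : ℝ×ℝ×ℝ → ℝ} (hf : ContDiffOn ℝ (⊤ : ℕ∞) f Upos) (x p : ℝ) {t : ℝ}
    (ht : 0 < t) : HasDerivAt (fun z => f (x,z,t)) (DD (0,1,0) f (x,p,t)) p := by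
  have hd := smooth_diffAt hf (show ((x,p,t) : ℝ×ℝ×ℝ) ∈ Upos from ht)
  have h : HasDerivAt (fun z : ℝ => ((x,z,t) : ℝ×ℝ×ℝ)) (0,1,0) p :=
    (hasDerivAt_const p x).prodMk ((hasDerivAt_id p).prodMk (hasDerivAt_const p t))
  exact hd.hasFDerivAt.comp_hasDerivAt p h

lemma hasDerivAt_lineT {f : ℝ×ℝ×ℝ → ℝ} (hf : ContDiffOn ℝ (⊤ : ℕ∞) f Upos) (x p : ℝ) {t : ℝ}
    (ht : 0 < t) : HasDerivAt (fun s => f (x,p,s)) (DD (0,0,1) f (x,p,t)) t := by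
  have hd := smooth_diffAt hf (show ((x,p,t) : ℝ×ℝ×ℝ) ∈ Upos from ht)
  have h : HasDerivAt (fun s : ℝ => ((x,p,s) : ℝ×ℝ×ℝ)) (0,0,1) t :=
    (hasDerivAt_const t x).prodMk ((hasDerivAt_const t p).prodMk (hasDerivAt_id t))
  exact hd.hasFDerivAt.comp_hasDerivAt t h

/-- `[L, A₅] = 0` on smooth functions, and hence `A₅` maps solutions of `LQ = 0` to solutions. -/
theorem stmt5 (Q : ℝ → ℝ → ℝ → ℝ) (hQ : SmoothPos Q) :
    (∀ x p t : ℝ, 0 < t →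
      Lop (A5op Q) x p t = A5op (fun a b c => Lop Q a b c) x p t) ∧
    ((∀ x p t : ℝ, 0 < t → Lop Q x p t = 0) →
      ∀ x p t : ℝ, 0 < t → Lop (A5op Q) x p t = 0) := by
  have main : ∀ x p t : ℝ, 0 < t →
      Lop (A5op Q) x p t = A5op (fun a b c => Lop Q a b c) x p t := by
    set F : ℝ×ℝ×ℝ → ℝ := fun v => Q v.1 v.2.1 v.2.2 with hFdef
    have hF : ContDiffOn ℝ (⊤ : ℕ∞) F Upos := hQ
    have h1 := DD_smooth hF (1,0,0)
    have h11 := DD_smooth h1 (1,0,0)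
    have h111 := DD_smooth h11 (1,0,0)
    have h2 := DD_smooth hF (0,1,0)
    have h22 := DD_smooth h2 (0,1,0)
    have h21 := DD_smooth h1 (0,1,0)
    have h221 := DD_smooth h21 (0,1,0)
    have h3 := DD_smooth hF (0,0,1)
    -- basic partial derivative formulas
    have hpdX : ∀ x p t : ℝ, 0 < t → pdX Q x p t = DD (1,0,0) F (x,p,t) :=
      fun x p t ht => (hasDerivAt_lineX hF x p ht).deriv
    have hpdT : ∀ x p t : ℝ, 0 < t → pdT Q x p t = DD (0,0,1) F (x,p,t) :=
      fun x p t ht => (hasDerivAt_lineT hF x p ht).deriv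
    have hpdXX : ∀ x p t : ℝ, 0 < t →
        pdXX Q x p t = DD (1,0,0) (DD (1,0,0) F) (x,p,t) := by
      intro x p t ht
      have heq : (fun y => deriv (fun z => Q z p t) y) = fun y => DD (1,0,0) F (y,p,t) :=
        funext fun y => (hasDerivAt_lineX hF y p ht).deriv
      rw [pdXX, heq]
      exact (hasDerivAt_lineX h1 x p ht).deriv
    have hpdPP : ∀ x p t : ℝ, 0 < t →
        pdPP Q x p t = DD (0,1,0) (DD (0,1,0) F) (x,p,t) := by
      intro x p t ht
      have heq : (fun y => deriv (fun z => Q x z t) y) = fun y => DD (0,1,0) F (x,y,t) :=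
        funext fun y => (hasDerivAt_lineP hF x y ht).deriv
      rw [pdPP, heq]
      exact (hasDerivAt_lineP h2 x p ht).deriv
    -- Lop Q formula
    have hLQ : ∀ x p t : ℝ, 0 < t → Lop Q x p t =
        DD (0,0,1) F (x,p,t) - 1/4 * DD (1,0,0) (DD (1,0,0) F) (x,p,t)
          + 1/(4*t^2) * DD (0,1,0) (DD (0,1,0) F) (x,p,t) := by
      intro x p t ht
      rw [Lop, hpdT x p t ht, hpdXX x p t ht, hpdPP x p t ht]
    -- pdX of Lop Q
    have hXL : ∀ x p t : ℝ, 0 < t → pdX (Lop Q) x p t =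
        DD (1,0,0) (DD (0,0,1) F) (x,p,t)
          - 1/4 * DD (1,0,0) (DD (1,0,0) (DD (1,0,0) F)) (x,p,t)
          + 1/(4*t^2) * DD (1,0,0) (DD (0,1,0) (DD (0,1,0) F)) (x,p,t) := by
      intro x p t ht
      have heq : (fun z => Lop Q z p t) = fun z => DD (0,0,1) F (z,p,t)
          - 1/4 * DD (1,0,0) (DD (1,0,0) F) (z,p,t)
          + 1/(4*t^2) * DD (0,1,0) (DD (0,1,0) F) (z,p,t) :=
        funext fun z => hLQ z p t ht
      have hd := ((hasDerivAt_lineX h3 x p ht).sub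
          (HasDerivAt.const_mul (1/4 : ℝ) (hasDerivAt_lineX h11 x p ht))).add
          (HasDerivAt.const_mul (1/(4*t^2) : ℝ) (hasDerivAt_lineX h22 x p ht))
      rw [pdX, heq]; exact hd.deriv
    intro x p t ht
    -- pdX of A5op Q (for all points)
    have hXA : ∀ y p' t' : ℝ, 0 < t' → pdX (A5op Q) y p' t' =
        2 * F (y,p',t') + 2*y * DD (1,0,0) F (y,p',t')
          + t' * DD (1,0,0) (DD (1,0,0) F) (y,p',t') := by
      intro y p' t' ht'
      have heq : (fun z => A5op Q z p' t') =
          fun z => 2*z * F (z,p',t') + t' * DD (1,0,0) F (z,p',t') := by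
        funext z
        rw [A5op, hpdX z p' t' ht']
      have hd := (((hasDerivAt_id' y).const_mul (2:ℝ)).mul
          (hasDerivAt_lineX hF y p' ht')).add
          (HasDerivAt.const_mul (t' : ℝ) (hasDerivAt_lineX h1 y p' ht'))
      rw [pdX, heq]; exact hd.deriv.trans (by ring)
    -- pdT of A5op Q
    have hTA : pdT (A5op Q) x p t =
        2*x * DD (0,0,1) F (x,p,t) + DD (1,0,0) F (x,p,t)
          + t * DD (0,0,1) (DD (1,0,0) F) (x,p,t) := by
      have hev : (fun s => A5op Q x p s) =ᶠ[nhds t]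
          (fun s => 2*x * F (x,p,s) + s * DD (1,0,0) F (x,p,s)) := by
        filter_upwards [isOpen_Ioi.mem_nhds (show t ∈ Set.Ioi (0:ℝ) from ht)] with s hs
        rw [A5op, hpdX x p s hs]
      have hd := (HasDerivAt.const_mul (2*x : ℝ) (hasDerivAt_lineT hF x p ht)).add
          ((hasDerivAt_id' t).mul (hasDerivAt_lineT h1 x p ht))
      rw [pdT, hev.deriv_eq]; exact hd.deriv.trans (by ring)
    -- pdXX of A5op Q
    have hXXA : pdXX (A5op Q) x p t =
        4 * DD (1,0,0) F (x,p,t) + 2*x * DD (1,0,0) (DD (1,0,0) F) (x,p,t)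
          + t * DD (1,0,0) (DD (1,0,0) (DD (1,0,0) F)) (x,p,t) := by
      have heq : (fun y => deriv (fun z => A5op Q z p t) y) =
          fun y => 2 * F (y,p,t) + 2*y * DD (1,0,0) F (y,p,t)
            + t * DD (1,0,0) (DD (1,0,0) F) (y,p,t) :=
        funext fun y => hXA y p t ht
      have hd := (((hasDerivAt_lineX hF x p ht).const_mul (2:ℝ)).add
          (((hasDerivAt_id' x).const_mul (2:ℝ)).mul (hasDerivAt_lineX h1 x p ht))).add
          (HasDerivAt.const_mul (t : ℝ) (hasDerivAt_lineX h11 x p ht))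
      rw [pdXX, heq]; exact hd.deriv.trans (by ring)
    -- pdP of A5op Q
    have hPA : ∀ z : ℝ, pdP (A5op Q) x z t =
        2*x * DD (0,1,0) F (x,z,t) + t * DD (0,1,0) (DD (1,0,0) F) (x,z,t) := by
      intro z
      have heq : (fun w => A5op Q x w t) =
          fun w => 2*x * F (x,w,t) + t * DD (1,0,0) F (x,w,t) := by
        funext w
        rw [A5op, hpdX x w t ht]
      have hd := (HasDerivAt.const_mul (2*x : ℝ) (hasDerivAt_lineP hF x z ht)).add
          (HasDerivAt.const_mul (t : ℝ) (hasDerivAt_lineP h1 x z ht))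
      rw [pdP, heq]; exact hd.deriv
    -- pdPP of A5op Q
    have hPPA : pdPP (A5op Q) x p t =
        2*x * DD (0,1,0) (DD (0,1,0) F) (x,p,t)
          + t * DD (0,1,0) (DD (0,1,0) (DD (1,0,0) F)) (x,p,t) := by
      have heq : (fun y => deriv (fun z => A5op Q x z t) y) =
          fun y => 2*x * DD (0,1,0) F (x,y,t) + t * DD (0,1,0) (DD (1,0,0) F) (x,y,t) :=
        funext fun y => hPA y
      have hd := (HasDerivAt.const_mul (2*x : ℝ) (hasDerivAt_lineP h2 x p ht)).add
          (HasDerivAt.const_mul (t : ℝ) (hasDerivAt_lineP h21 x p ht))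
      rw [pdPP, heq]; exact hd.deriv
    -- swap identities
    have hv : ((x,p,t) : ℝ×ℝ×ℝ) ∈ Upos := ht
    have s31 : DD (0,0,1) (DD (1,0,0) F) (x,p,t) = DD (1,0,0) (DD (0,0,1) F) (x,p,t) :=
      DD_swap hF hv _ _
    have s221 : DD (0,1,0) (DD (0,1,0) (DD (1,0,0) F)) (x,p,t)
        = DD (1,0,0) (DD (0,1,0) (DD (0,1,0) F)) (x,p,t) := by
      have hev : (DD (0,1,0) (DD (1,0,0) F)) =ᶠ[nhds ((x,p,t) : ℝ×ℝ×ℝ)]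
          (DD (1,0,0) (DD (0,1,0) F)) := by
        filter_upwards [isOpen_Upos.mem_nhds hv] with w hw
        exact DD_swap hF hw _ _
      have h1' : DD (0,1,0) (DD (0,1,0) (DD (1,0,0) F)) (x,p,t)
          = DD (0,1,0) (DD (1,0,0) (DD (0,1,0) F)) (x,p,t) := by
        show (fderiv ℝ (DD (0,1,0) (DD (1,0,0) F)) (x,p,t)) (0,1,0)
            = (fderiv ℝ (DD (1,0,0) (DD (0,1,0) F)) (x,p,t)) (0,1,0)
        rw [hev.fderiv_eq]
      rw [h1']
      exact DD_swap h2 hv _ _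
    -- put everything together
    have hA5L : A5op (fun a b c => Lop Q a b c) x p t
        = 2*x * Lop Q x p t + t * pdX (Lop Q) x p t := rfl
    rw [Lop, hTA, hXXA, hPPA, hA5L, hLQ x p t ht, hXL x p t ht, s31, s221]
    ring
  refine ⟨main, fun hsol x p t ht => ?_⟩
  rw [main x p t ht]
  have hz : (fun z => Lop Q z p t) = fun _ => (0:ℝ) := funext fun z => hsol z p t ht
  show 2*x * Lop Q x p t + t * pdX (Lop Q) x p t = 0
  rw [hsol x p t ht, pdX, hz, deriv_const]
  ring
end

section
/- For any γ > 0 and t > 0, the function Q(x,p,t) = ((1/γ + t)(1/γ + 1/t))^{-1/2} exp(-x²/(1/γ + t) - p²/(1/γ + 1/t)) is a solution of the pseudo-diffusion equation ∂Q/∂t - (1/4)∂²Q/∂x² + (1/(4t²))∂²Q/∂p² = 0. -/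
lemma dX_aux (a b S p : ℝ) (y : ℝ) :
    HasDerivAt (fun z : ℝ => Real.exp (-(z^2/a) - p^2/b) / S)
      ((-(2*y/a)) * (Real.exp (-(y^2/a) - p^2/b) / S)) y := by
  have h1 : HasDerivAt (fun z : ℝ => -(z^2/a) - p^2/b) (-(2*y/a)) y := by
    have := (((hasDerivAt_pow 2 y).div_const a).neg).sub_const (p^2/b)
    exact this.congr_deriv (by push_cast; ring)
  have h2 := (h1.exp).div_const S
  exact h2.congr_deriv (by ring)

lemma pdXX_eval (a b S p x : ℝ) :
    deriv (fun y => deriv (fun z : ℝ => Real.exp (-(z^2/a) - p^2/b) / S) y) x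
      = (-(2/a) + (2*x/a)^2) * (Real.exp (-(x^2/a) - p^2/b) / S) := by
  have hfun : (fun y => deriv (fun z : ℝ => Real.exp (-(z^2/a) - p^2/b) / S) y)
      = fun y => (-(2*y/a)) * (Real.exp (-(y^2/a) - p^2/b) / S) :=
    funext fun y => (dX_aux a b S p y).deriv
  rw [hfun]
  have h3 : HasDerivAt (fun y : ℝ => -(2*y/a)) (-(2/a)) x := by
    have := (((hasDerivAt_id x).const_mul 2).div_const a).neg
    exact this.congr_deriv (by ring)
  have h4 := h3.mul (dX_aux a b S p x)
  have := HasDerivAt.deriv (f := fun y => -(2*y/a) * (Real.exp (-(y^2/a) - p^2/b) / S)) h4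
  rw [this]; ring

lemma dP_aux (a b S c : ℝ) (y : ℝ) :
    HasDerivAt (fun z : ℝ => Real.exp (-(c/a) - z^2/b) / S)
      ((-(2*y/b)) * (Real.exp (-(c/a) - y^2/b) / S)) y := by
  have h1 : HasDerivAt (fun z : ℝ => -(c/a) - z^2/b) (-(2*y/b)) y := by
    have := (hasDerivAt_const y (-(c/a))).sub ((hasDerivAt_pow 2 y).div_const b)
    exact this.congr_deriv (by push_cast; ring)
  have h2 := (h1.exp).div_const S
  exact h2.congr_deriv (by ring)

lemma pdPP_eval (a b S c p : ℝ) :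
    deriv (fun y => deriv (fun z : ℝ => Real.exp (-(c/a) - z^2/b) / S) y) p
      = (-(2/b) + (2*p/b)^2) * (Real.exp (-(c/a) - p^2/b) / S) := by
  have hfun : (fun y => deriv (fun z : ℝ => Real.exp (-(c/a) - z^2/b) / S) y)
      = fun y => (-(2*y/b)) * (Real.exp (-(c/a) - y^2/b) / S) :=
    funext fun y => (dP_aux a b S c y).deriv
  rw [hfun]
  have h3 : HasDerivAt (fun y : ℝ => -(2*y/b)) (-(2/b)) p := by
    have := (((hasDerivAt_id p).const_mul 2).div_const b).neg
    exact this.congr_deriv (by ring)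
  have h4 := h3.mul (dP_aux a b S c p)
  have := HasDerivAt.deriv (f := fun y => -(2*y/b) * (Real.exp (-(c/a) - y^2/b) / S)) h4
  rw [this]; ring

/-- The squeezed thermal distribution solves the pseudo-diffusion equation. -/
theorem stmt18 (γ : ℝ) (hγ : 0 < γ) :
    ∀ x p t : ℝ, 0 < t →
      Lop (fun x p t =>
        Real.exp (-(x^2/(1/γ + t)) - p^2/(1/γ + 1/t)) /
          Real.sqrt ((1/γ + t) * (1/γ + 1/t))) x p t = 0 := by
  intro x p t ht
  have ht' : t ≠ 0 := ht.ne'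
  have ha : (0:ℝ) < 1/γ + t := by positivity
  have hb : (0:ℝ) < 1/γ + 1/t := by positivity
  have hab : (0:ℝ) < (1/γ + t) * (1/γ + 1/t) := mul_pos ha hb
  have hSpos : (0:ℝ) < Real.sqrt ((1/γ + t) * (1/γ + 1/t)) := Real.sqrt_pos.mpr hab
  have hS2 : Real.sqrt ((1/γ + t) * (1/γ + 1/t)) ^ 2 = (1/γ + t) * (1/γ + 1/t) :=
    Real.sq_sqrt hab.le
  -- t-derivative
  have hA : HasDerivAt (fun s : ℝ => 1/γ + s) 1 t := (hasDerivAt_id t).const_add (1/γ)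
  have hB : HasDerivAt (fun s : ℝ => 1/γ + 1/s) (-(1/t^2)) t := by
    have h := (hasDerivAt_inv ht').const_add (1/γ)
    have heq : (fun s : ℝ => 1/γ + 1/s) = (fun s : ℝ => 1/γ + s⁻¹) := by
      funext s; rw [one_div s]
    rw [heq, show -(1/t^2) = -((t:ℝ)^2)⁻¹ by rw [one_div]]
    exact h
  have hf1 : HasDerivAt (fun s : ℝ => -(x^2/(1/γ + s)))
      (-((0 * (1/γ + t) - x^2 * 1)/(1/γ + t)^2)) t :=
    ((hasDerivAt_const t (x^2)).div hA ha.ne').neg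
  have hf2 : HasDerivAt (fun s : ℝ => p^2/(1/γ + 1/s))
      ((0 * (1/γ + 1/t) - p^2 * (-(1/t^2)))/(1/γ + 1/t)^2) t :=
    (hasDerivAt_const t (p^2)).div hB hb.ne'
  have hf := hf1.sub hf2
  have hE := hf.exp
  have hAB := hA.mul hB
  have hSd := hAB.sqrt hab.ne'
  have hQ := hE.div hSd hSpos.ne'
  have hT := HasDerivAt.deriv (f := fun s => Real.exp (-(x^2/(1/γ + s)) - p^2/(1/γ + 1/s)) /
    Real.sqrt ((1/γ + s) * (1/γ + 1/s))) hQ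
  simp only [Pi.sub_apply, Pi.mul_apply] at hT
  simp only [Lop, pdT, pdXX, pdPP]
  rw [hT, pdXX_eval, pdPP_eval]
  set S := Real.sqrt ((1/γ + t) * (1/γ + 1/t)) with hSdef
  clear_value S
  clear hT hQ hSd hAB hE hf hf1 hf2 hA hB hSdef
  set E := Real.exp (-(x^2/(1/γ + t)) - p^2/(1/γ + 1/t)) with hEdef
  clear_value E
  have hbb : 1/γ + 1/t = S^2/(1/γ+t) := by
    rw [hS2]; field_simp
  rw [hbb]
  field_simp
  ring
end
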